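/- Let C ⊆ F_{q^m}^n be an F_{q^m}-linear rank-metric code of dimension k ≥ 1 that is rank-nondegenerate. Then the maximum rank of a codeword of C equals min{n, m}. -/

import Mathlib

/-!
The rank of `c` is the dimension of the `K`-span of its entries (row rank equals column rank),
so it is at most `min n m`.

If `n ≤ m`, it suffices to find `c ∈ C` with `K`-linearly independent entries. Nondegeneracy
makes each `c ↦ ∑ aᵢ cᵢ` (`0 ≠ a ∈ Kⁿ`) a nonzero, hence surjective, `L`-linear form on `C`;
its kernel has index `qᵐ` (`q = #K`), and fewer than `qᵐ` such kernels cannot cover `C`.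

If `m ≤ n`, it suffices to find `c ∈ C` whose entries span `L`, i.e. such that no nonzero
`φ : L →ₗ[K] K` kills every `cᵢ`. Each `c ↦ (φ cᵢ)ᵢ` maps `C` onto `Kⁿ`, so its kernel has
index `qⁿ`, and there are fewer than `qⁿ` such `φ`.
-/

open Module Submodule

/-- The rank support of a vector `v ∈ L^n` over the subfield `K`: the `K`-span of the
rows of the expansion matrix, i.e. the space of all `(φ (v 1), ..., φ (v n))` for
`K`-linear functionals `φ : L → K`. -/
noncomputable def rkSupport (K : Type) {L : Type} [Field K] [Field L] [Algebra K L]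
    {n : ℕ} (v : Fin n → L) : Submodule K (Fin n → K) :=
  LinearMap.range (LinearMap.pi (fun i => LinearMap.applyₗ (v i) :
    Fin n → Module.Dual K L →ₗ[K] K))

open Function

theorem AddMonoidHom.exists_forall_apply_ne_zero_of_card_lt {ι G H : Type*} [Finite ι]
    [AddGroup G] [Finite G] [AddGroup H] (f : ι → G →+ H) (hf : ∀ i, Surjective (f i))
    (hι : Nat.card ι < Nat.card H) : ∃ g, ∀ i, f i g ≠ 0 := by
  have := Fintype.ofFinite ι
  by_contra! hcover
  have hker (i : ι) : Nat.card (f i).ker * Nat.card H = Nat.card G := by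
    rw [← (f i).ker.card_mul_index, AddSubgroup.index_ker, (f i).range_eq_top.2 (hf i),
      AddSubgroup.card_top]
  have hunion : Nat.card G ≤ ∑ i, Nat.card (f i).ker := by
    calc Nat.card G = (⋃ i, ((f i).ker : Set G)).ncard := by
          rw [Set.iUnion_eq_univ_iff.2 (by simpa using hcover), Set.ncard_univ]
      _ ≤ ∑ i, Nat.card (f i).ker := Set.ncard_iUnion_le_of_fintype _
  have hG : 0 < Nat.card G := Nat.card_pos
  refine lt_irrefl (Nat.card G * Nat.card H) ?_
  calc Nat.card G * Nat.card H ≤ ∑ i, Nat.card (f i).ker * Nat.card H := by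
        rw [← Finset.sum_mul]; gcongr
    _ = Nat.card ι * Nat.card G := by
        simp only [hker, Finset.sum_const, Finset.card_univ, smul_eq_mul,
          Nat.card_eq_fintype_card]
    _ < Nat.card G * Nat.card H := by rw [mul_comm]; gcongr

theorem Module.natCard_ne_zero_lt_natCard_of_finrank_le (K : Type*) {V W : Type*} [Field K]
    [Finite K] [AddCommGroup V] [Module K V] [Finite V] [AddCommGroup W] [Module K W] [Finite W]
    (h : finrank K V ≤ finrank K W) : Nat.card {v : V // v ≠ 0} < Nat.card W :=
  calc Nat.card {v : V // v ≠ 0} < Nat.card V := Finite.card_subtype_lt (not_not.2 rfl)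
    _ ≤ Nat.card W := by
      rw [natCard_eq_pow_finrank (K := K) (V := V), natCard_eq_pow_finrank (K := K) (V := W)]
      exact Nat.pow_le_pow_right Nat.card_pos h

variable {K L : Type} [Field K] [Field L] [Algebra K L] {n : ℕ}

theorem finrank_rkSupport (v : Fin n → L) :
    finrank K (rkSupport K v) = (Set.range v).finrank K := by
  -- `rkSupport K v` is the range of the transpose of `a ↦ ∑ aᵢ • vᵢ`, read in the dual basis.
  have : rkSupport K v = LinearMap.range
      ((Pi.basisFun K (Fin n)).dualBasis.equivFun.toLinearMap ∘ₗ
        (Fintype.linearCombination K v).dualMap) := by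
    unfold rkSupport; congr 1; ext φ i; simp
  rw [this, LinearMap.range_comp, LinearEquiv.finrank_map_eq,
    LinearMap.finrank_range_dualMap_eq_finrank_range, Fintype.range_linearCombination]
  rfl

theorem dual_apply_comp_eq_apply_sum_smul (ψ : Dual K (Fin n → K)) (φ : Dual K L)
    (c : Fin n → L) :
    ψ (fun i => φ (c i)) = φ (∑ i, ψ (Pi.single i 1) • c i) := by
  conv_lhs => rw [← (LinearEquiv.piRing K K (Fin n) K).symm_apply_apply ψ,
    LinearEquiv.piRing_symm_apply]
  simp [map_sum, mul_comm]

section NondegenerateCode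

variable {C : Submodule L (Fin n → L)} (hnd : (⨆ v ∈ C, rkSupport K v) = ⊤)
include hnd

theorem exists_mem_sum_smul_ne_zero {a : Fin n → K} (ha : a ≠ 0) :
    ∃ c ∈ C, ∑ i, a i • c i ≠ 0 := by
  by_contra! h
  have hker : (⨆ v ∈ C, rkSupport K v) ≤ LinearMap.ker (Fintype.linearCombination K a) := by
    refine iSup₂_le fun c hc => ?_
    rintro _ ⟨φ, rfl⟩
    show Fintype.linearCombination K a (fun i => φ (c i)) = 0
    simpa [h c hc] using dual_apply_comp_eq_apply_sum_smul (Fintype.linearCombination K a) φ c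
  rw [hnd, top_le_iff, LinearMap.ker_eq_top] at hker
  exact ha (funext fun j => by simpa using LinearMap.congr_fun hker (Pi.single j 1))

theorem surjective_sum_smul {a : Fin n → K} (ha : a ≠ 0) :
    Surjective (((Fintype.bilinearCombination K L).flip a).domRestrict C) := by
  obtain ⟨c, hc, hne⟩ := exists_mem_sum_smul_ne_zero hnd ha
  refine LinearMap.surjective_of_ne_zero fun h => hne ?_
  simpa [Fintype.linearCombination_apply] using LinearMap.congr_fun h ⟨c, hc⟩

theorem surjective_compLeft {φ : Dual K L} (hφ : φ ≠ 0) :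
    Surjective ((φ.compLeft (Fin n)).domRestrict (C.restrictScalars K)) := by
  -- A functional `ψ` on `Kⁿ` killing the range would give `φ (∑ ψ(eᵢ) • cᵢ) = 0` for all
  -- `c ∈ C`, and these sums exhaust `L`.
  rw [← LinearMap.range_eq_top]
  by_contra hne
  obtain ⟨ψ, hψ, hψR⟩ :=
    exists_dual_map_eq_bot_of_lt_top (lt_top_iff_ne_top.2 hne) inferInstance
  have ha : (fun i => ψ (Pi.single i 1)) ≠ 0 := fun h =>
    hψ ((Pi.basisFun K (Fin n)).ext fun i => by simpa using congrFun h i)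
  refine hφ (LinearMap.ext fun y => ?_)
  obtain ⟨⟨c, hc⟩, rfl⟩ := surjective_sum_smul hnd ha y
  have : ψ (fun i => φ (c i)) = 0 := by
    rw [← mem_bot K, ← hψR]
    exact mem_map_of_mem ⟨⟨c, hc⟩, rfl⟩
  simpa [dual_apply_comp_eq_apply_sum_smul, Fintype.linearCombination_apply] using this

variable [Fintype K] [Fintype L]

theorem exists_mem_linearIndependent (hn : n ≤ finrank K L) :
    ∃ c ∈ C, LinearIndependent K c := by
  obtain ⟨c, hc⟩ := AddMonoidHom.exists_forall_apply_ne_zero_of_card_lt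
    (fun a : {a : Fin n → K // a ≠ 0} =>
      (((Fintype.bilinearCombination K L).flip a.1).domRestrict C).toAddMonoidHom)
    (fun a => surjective_sum_smul hnd a.2)
    (Module.natCard_ne_zero_lt_natCard_of_finrank_le K (by simpa using hn))
  refine ⟨c, c.2, Fintype.linearIndependent_iff.2 fun a h => ?_⟩
  by_contra! ha
  exact hc ⟨a, fun h0 => by simp [h0] at ha⟩
    (by simpa [Fintype.linearCombination_apply] using h)

theorem exists_mem_span_eq_top (hn : finrank K L ≤ n) :
    ∃ c ∈ C, span K (Set.range c) = ⊤ := by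
  have : Finite (Dual K L) := Module.finite_of_finite K
  obtain ⟨⟨c, hcC⟩, hc⟩ := AddMonoidHom.exists_forall_apply_ne_zero_of_card_lt
    (fun φ : {φ : Dual K L // φ ≠ 0} =>
      ((φ.1.compLeft (Fin n)).domRestrict (C.restrictScalars K)).toAddMonoidHom)
    (fun φ => surjective_compLeft hnd φ.2)
    (Module.natCard_ne_zero_lt_natCard_of_finrank_le K (by simpa using hn))
  refine ⟨c, hcC, ?_⟩
  by_contra hne
  obtain ⟨φ, hφ, hφc⟩ :=
    exists_dual_map_eq_bot_of_lt_top (lt_top_iff_ne_top.2 hne) inferInstance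
  refine hc ⟨φ, hφ⟩ (funext fun i => ?_)
  show φ (c i) = 0
  rw [← mem_bot K, ← hφc]
  exact mem_map_of_mem (subset_span ⟨i, rfl⟩)

end NondegenerateCode

theorem stmt_6_general {K L : Type} [Field K] [Field L] [Algebra K L] [Fintype K] [Fintype L]
    {n m : ℕ} (hm : Module.finrank K L = m)
    (C : Submodule L (Fin n → L))
    (hnd : (⨆ v ∈ C, rkSupport K v) = ⊤) :
    IsGreatest {r : ℕ | ∃ c ∈ C, Module.finrank K (rkSupport K c) = r} (min n m) := by
  refine ⟨?_, ?_⟩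
  · rcases le_total n m with hnm | hmn
    · obtain ⟨c, hc, hli⟩ := exists_mem_linearIndependent hnd (hm ▸ hnm)
      refine ⟨c, hc, ?_⟩
      rw [finrank_rkSupport, Set.finrank, finrank_span_eq_card hli, Fintype.card_fin,
        min_eq_left hnm]
    · obtain ⟨c, hc, htop⟩ := exists_mem_span_eq_top hnd (hm ▸ hmn)
      refine ⟨c, hc, ?_⟩
      rw [finrank_rkSupport, Set.finrank, htop, finrank_top, hm, min_eq_right hmn]
  · rintro r ⟨c, -, rfl⟩
    rw [finrank_rkSupport]
    exact le_min ((finrank_range_le_card c).trans_eq (Fintype.card_fin n))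
      (hm ▸ Submodule.finrank_le _)

theorem stmt_6 {K L : Type} [Field K] [Field L] [Algebra K L] [Fintype K] [Fintype L]
    {n m : ℕ} (hm : Module.finrank K L = m)
    (C : Submodule L (Fin n → L)) (hk : 1 ≤ Module.finrank L C)
    (hnd : (⨆ v ∈ C, rkSupport K v) = ⊤) :
    IsGreatest {r : ℕ | ∃ c ∈ C, Module.finrank K (rkSupport K c) = r} (min n m) :=
  stmt_6_general hm C hnd
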